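/- arXiv:math/0510082 — 4 statements merged into one kernel-verified Lean document; each statement's English description precedes it below -/
import Mathlib

section
/- For every integer k: ψ̄³(T^{4k}) = T^k, ψ̄³(T^{4k+1}) = T, ψ̄³(T^{4k+2}) = T, and ψ̄³(T^{4k+3}) = T^k, where ψ̄³ denotes the third iterate of ψ̄. -/
noncomputable section

/-- The action of `Equiv.Perm X` on `X → G` by permuting coordinates. -/
def permAut (X G : Type) [Group G] : Equiv.Perm X →* MulAut (X → G) where
  toFun σ :=
  { toFun := fun f => f ∘ ⇑σ⁻¹
    invFun := fun f => f ∘ ⇑σ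
    left_inv := fun f => by funext x; simp
    right_inv := fun f => by funext x; simp
    map_mul' := fun f g => rfl }
  map_one' := by ext f x; simp
  map_mul' := fun σ τ => by
    ext f x
    simp [Function.comp, mul_inv_rev]

/-- The wreath product `G ≀ C₂` with base alphabet `Bool`. -/
abbrev Wr (G : Type) [Group G] := (Bool → G) ⋊[permAut Bool G] Equiv.Perm Bool

/-- `pair g₀ g₁` is the element `⟨g₀, g₁⟩` of the base group. -/
def pair {G : Type} [Group G] (g₀ g₁ : G) : Bool → G := fun x => bif x then g₁ else g₀

/-- The nontrivial element of `Sym({0,1})`. -/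
def σswap : Equiv.Perm Bool := Equiv.swap false true

namespace Rabbit

/-- The free group on two generators `S`, `T`. -/
abbrev F := FreeGroup Bool

def Sg : F := FreeGroup.of false
def Tg : F := FreeGroup.of true

/-- The wreath recursion `Φ(T) = ⟨1, S⁻¹T⁻¹⟩σ`, `Φ(S) = ⟨T, 1⟩`. -/
def Phi : F →* Wr F := FreeGroup.lift fun x =>
  if x then ⟨pair 1 (Sg⁻¹ * Tg⁻¹), σswap⟩ else ⟨pair Tg 1, 1⟩

/-- The section `g|ₓ`. -/
def sec (g : F) (x : Bool) : F := (Phi g).left x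

/-- `Φ(g)` is inactive. -/
def inactive (g : F) : Prop := (Phi g).right = 1

open scoped Classical in
/-- The map `ψ̄`. -/
def psibar (g : F) : F := if inactive g then sec g false else Tg * sec g false

end Rabbit

namespace Rabbit

def ag : F := Sg⁻¹ * Tg⁻¹

lemma phiT : Phi Tg = ⟨pair 1 ag, σswap⟩ := by
  simp [Phi, Tg, ag]

lemma phiS : Phi Sg = ⟨pair Tg 1, 1⟩ := by
  simp [Phi, Sg]

lemma swap_pair (g₀ g₁ : F) : permAut Bool F σswap (pair g₀ g₁) = pair g₁ g₀ := by
  funext x; cases x <;> simp [permAut, σswap, pair]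

lemma pair_mul (g₀ g₁ h₀ h₁ : F) : pair g₀ g₁ * pair h₀ h₁ = pair (g₀*h₀) (g₁*h₁) := by
  funext x; cases x <;> rfl

lemma pair_zpow (g₀ g₁ : F) (m : ℤ) : pair g₀ g₁ ^ m = pair (g₀^m) (g₁^m) := by
  funext x; cases x <;> rfl

lemma mk_mul (f g : Bool → F) (ρ τ : Equiv.Perm Bool) :
    (⟨f, ρ⟩ * ⟨g, τ⟩ : Wr F) = ⟨f * (permAut Bool F ρ g), ρ * τ⟩ := rfl

lemma mk_one_eq_inl (f : Bool → F) : (⟨f, 1⟩ : Wr F) = SemidirectProduct.inl f := rfl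

lemma mk_one_zpow (f : Bool → F) (m : ℤ) : (⟨f, 1⟩ : Wr F) ^ m = ⟨f ^ m, 1⟩ := by
  rw [mk_one_eq_inl, ← map_zpow, mk_one_eq_inl]

end Rabbit

namespace Rabbit

lemma phi_T_even (m : ℤ) : Phi (Tg ^ (2*m)) = ⟨pair (ag^m) (ag^m), 1⟩ := by
  rw [zpow_mul, map_zpow]
  have h2 : Phi (Tg ^ (2:ℤ)) = ⟨pair ag ag, 1⟩ := by
    rw [show (2:ℤ) = 1 + 1 by decide, zpow_add, zpow_one, map_mul, phiT, mk_mul,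
      swap_pair, pair_mul]
    simp [σswap, Equiv.swap_mul_self]
  rw [h2, mk_one_zpow, pair_zpow]

lemma phi_T_odd (m : ℤ) : Phi (Tg ^ (2*m+1)) = ⟨pair (ag^m) (ag^m * ag), σswap⟩ := by
  rw [zpow_add, zpow_one, map_mul, phi_T_even, phiT, mk_mul]
  simp only [map_one, MulAut.one_apply, one_mul, pair_mul, mul_one]

lemma phi_a : Phi ag = ⟨pair Sg 1, σswap⟩ := by
  rw [ag, map_mul, map_inv, map_inv, phiS, phiT]
  ext x
  · cases x <;>
      erw [SemidirectProduct.mul_left, SemidirectProduct.inv_left, SemidirectProduct.inv_left,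
        SemidirectProduct.inv_right] <;>
      simp [SemidirectProduct.mul_left, SemidirectProduct.inv_left,
        SemidirectProduct.inv_right, swap_pair, permAut, σswap, pair, ag,
        -SemidirectProduct.mk_eq_inl_mul_inr, Equiv.Perm.one_symm]
  · simp [SemidirectProduct.mul_right, SemidirectProduct.inv_right, σswap]

lemma phi_a_even (j : ℤ) : Phi (ag ^ (2*j)) = ⟨pair (Sg^j) (Sg^j), 1⟩ := by
  rw [zpow_mul, map_zpow]
  have h2 : Phi (ag ^ (2:ℤ)) = ⟨pair Sg Sg, 1⟩ := by
    rw [show (2:ℤ) = 1 + 1 by decide, zpow_add, zpow_one, map_mul, phi_a, mk_mul,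
      swap_pair, pair_mul]
    simp [σswap, Equiv.swap_mul_self]
  rw [h2, mk_one_zpow, pair_zpow]

lemma phi_a_odd (j : ℤ) : Phi (ag ^ (2*j+1)) = ⟨pair (Sg^j * Sg) (Sg^j), σswap⟩ := by
  rw [zpow_add, zpow_one, map_mul, phi_a_even, phi_a, mk_mul]
  simp only [map_one, MulAut.one_apply, one_mul, pair_mul, mul_one]

lemma phi_S (j : ℤ) : Phi (Sg ^ j) = ⟨pair (Tg^j) 1, 1⟩ := by
  rw [map_zpow, phiS, mk_one_zpow, pair_zpow, one_zpow]

lemma phi_Ta_even (j : ℤ) : Phi (Tg * ag ^ (2*j)) = ⟨pair (Sg^j) (ag * Sg^j), σswap⟩ := by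
  rw [map_mul, phiT, phi_a_even, mk_mul, swap_pair, pair_mul, one_mul, mul_one]

lemma phi_Ta_odd (j : ℤ) : Phi (Tg * ag ^ (2*j+1)) = ⟨pair (Sg^j) (ag * (Sg^j * Sg)), 1⟩ := by
  rw [map_mul, phiT, phi_a_odd, mk_mul, swap_pair, pair_mul, one_mul]
  simp [σswap, Equiv.swap_mul_self]

lemma phi_TS (j : ℤ) : Phi (Tg * Sg ^ j) = ⟨pair 1 (ag * Tg^j), σswap⟩ := by
  rw [map_mul, phiT, phi_S, mk_mul, swap_pair, pair_mul, one_mul, mul_one]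

lemma swap_ne_one : σswap ≠ 1 := by
  intro h
  have : σswap false = (1 : Equiv.Perm Bool) false := by rw [h]
  simp [σswap] at this

lemma psibar_inact (g : F) (f : Bool → F) (h : Phi g = ⟨f, 1⟩) : psibar g = f false := by
  simp [psibar, inactive, sec, h]

lemma psibar_act (g : F) (f : Bool → F) (h : Phi g = ⟨f, σswap⟩) :
    psibar g = Tg * f false := by
  simp [psibar, inactive, sec, h, swap_ne_one]

end Rabbit

namespace Rabbit

lemma pair_false (g₀ g₁ : F) : pair g₀ g₁ false = g₀ := rfl

lemma psibar_T_even (m : ℤ) : psibar (Tg ^ (2*m)) = ag ^ m := by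
  rw [psibar_inact _ _ (phi_T_even m), pair_false]

lemma psibar_T_odd (m : ℤ) : psibar (Tg ^ (2*m+1)) = Tg * ag ^ m := by
  rw [psibar_act _ _ (phi_T_odd m), pair_false]

lemma psibar_a_even (j : ℤ) : psibar (ag ^ (2*j)) = Sg ^ j := by
  rw [psibar_inact _ _ (phi_a_even j), pair_false]

lemma psibar_a_odd (j : ℤ) : psibar (ag ^ (2*j+1)) = Tg * Sg ^ (j+1) := by
  rw [psibar_act _ _ (phi_a_odd j), pair_false, zpow_add_one]

lemma psibar_Ta_even (j : ℤ) : psibar (Tg * ag ^ (2*j)) = Tg * Sg ^ j := by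
  rw [psibar_act _ _ (phi_Ta_even j), pair_false]

lemma psibar_Ta_odd (j : ℤ) : psibar (Tg * ag ^ (2*j+1)) = Sg ^ j := by
  rw [psibar_inact _ _ (phi_Ta_odd j), pair_false]

lemma psibar_S (j : ℤ) : psibar (Sg ^ j) = Tg ^ j := by
  rw [psibar_inact _ _ (phi_S j), pair_false]

lemma psibar_TS (j : ℤ) : psibar (Tg * Sg ^ j) = Tg := by
  rw [psibar_act _ _ (phi_TS j), pair_false, mul_one]

end Rabbit

open Rabbit in
theorem stmt2 : ∀ k : ℤ,
    psibar^[3] (Tg ^ (4 * k)) = Tg ^ k ∧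
    psibar^[3] (Tg ^ (4 * k + 1)) = Tg ∧
    psibar^[3] (Tg ^ (4 * k + 2)) = Tg ∧
    psibar^[3] (Tg ^ (4 * k + 3)) = Tg ^ k := by
  intro k
  have hit : ∀ g : F, psibar^[3] g = psibar (psibar (psibar g)) := fun g => rfl
  refine ⟨?_, ?_, ?_, ?_⟩
  · rw [hit, show 4*k = 2*(2*k) by ring, psibar_T_even, psibar_a_even, psibar_S]
  · rw [hit, show 4*k+1 = 2*(2*k)+1 by ring, psibar_T_odd, psibar_Ta_even, psibar_TS]
  · rw [hit, show 4*k+2 = 2*(2*k+1) by ring, psibar_T_even, psibar_a_odd, psibar_TS]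
  · rw [hit, show 4*k+3 = 2*(2*k+1)+1 by ring, psibar_T_odd, psibar_Ta_odd, psibar_S]
end
end

section
/- The subgroup Dom ψ³ of F equals the subgroup generated by the nine elements S⁴, T⁴, ST², S⁻²T²S, S⁻¹T²S², T⁻¹ST, TST⁻¹, (TS)⁻¹S(TS), (T⁻¹S)⁻¹S(T⁻¹S); this subgroup has index 8 in F; and the third iterate ψ³ = ψ∘ψ∘ψ satisfies ψ³(S⁴) = S, ψ³(T⁴) = T, and ψ³(g) = 1 for each of the remaining seven listed generators g. -/
noncomputable section

namespace Rabbit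

/-- The nine listed generators of `Dom ψ³`. -/
def gens : Set F :=
  {Sg ^ 4, Tg ^ 4, Sg * Tg ^ 2, Sg⁻¹ * Sg⁻¹ * Tg ^ 2 * Sg, Sg⁻¹ * Tg ^ 2 * Sg ^ 2,
    Tg⁻¹ * Sg * Tg, Tg * Sg * Tg⁻¹, (Tg * Sg)⁻¹ * Sg * (Tg * Sg),
    (Tg⁻¹ * Sg)⁻¹ * Sg * (Tg⁻¹ * Sg)}

/-- The third iterate of the virtual endomorphism `ψ` (defined on `Dom ψ³`
as the threefold first-coordinate section). -/
def psi3 (g : F) : F := sec (sec (sec g false) false) false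

end Rabbit

/-!
Each `Dom ψⁿ⁺¹ = ψ⁻¹(Dom ψⁿ)` is a subgroup, because `ψ` is multiplicative on inactive elements.
The eight words `1, S, S⁻¹, T, T⁻¹, S², S⁻¹T, S⁻¹T⁻¹` lie in distinct right cosets of `Dom ψ³`
(their images of the vertex `000` differ), while right multiplication by `S^±1`, `T^±1` carries
each of them into `H` times another one, `H` being generated by the nine words (a Schreier coset
table, checked by computation). So `H ≤ Dom ψ³` has at most eight right cosets, forcing
`H = Dom ψ³` of index 8. The values of `ψ³` are a direct computation of sections.
-/

namespace Subgroup

variable {G ι : Type*} [Group G]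

theorem exists_mul_inv_mem_of_closure_eq_top {H : Subgroup G} {s : Set G}
    (hs : closure s = ⊤) (hs_inv : ∀ x ∈ s, x⁻¹ ∈ s) {R : ι → G} {i₀ : ι} (hR₀ : R i₀ = 1)
    (hstep : ∀ i, ∀ x ∈ s, ∃ j, R i * x * (R j)⁻¹ ∈ H) (g : G) :
    ∃ j, g * (R j)⁻¹ ∈ H := by
  suffices h : ∀ i, ∃ j, R i * g * (R j)⁻¹ ∈ H by simpa [hR₀] using h i₀
  have hg : g ∈ closure s := hs ▸ mem_top g
  induction hg using closure_induction'' with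
  | mem x hx => exact fun i => hstep i x hx
  | inv_mem x hx => exact fun i => hstep i x⁻¹ (hs_inv x hx)
  | one => exact fun i => ⟨i, by simp⟩
  | mul x y _ _ hx hy =>
    intro i
    obtain ⟨j, hj⟩ := hx i
    obtain ⟨k, hk⟩ := hy j
    exact ⟨k, by simpa [mul_assoc] using H.mul_mem hj hk⟩

theorem index_eq_card_of_mul_inv_mem {K : Subgroup G} {R : ι → G}
    (hcover : ∀ g, ∃ i, g * (R i)⁻¹ ∈ K) (hsep : ∀ i j, R i * (R j)⁻¹ ∈ K → i = j) :
    K.index = Nat.card ι := by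
  have hR : Function.Injective R := fun i j h => hsep i j (by simp [h])
  have hK : IsComplement (K : Set G) (Set.range R) := by
    refine isComplement_iff_existsUnique_mul_inv_mem.mpr fun g => ?_
    obtain ⟨i, hi⟩ := hcover g
    refine ⟨⟨R i, i, rfl⟩, hi, ?_⟩
    rintro ⟨_, j, rfl⟩ hj
    have := hsep j i (by simpa [mul_assoc] using K.mul_mem (K.inv_mem hj) hi)
    simp [this]
  rw [← hK.card_right, Nat.card_range_of_injective hR]

theorem eq_of_le_of_mul_inv_mem {H K : Subgroup G} (hHK : H ≤ K) {R : ι → G}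
    (hcover : ∀ g, ∃ i, g * (R i)⁻¹ ∈ H) (hsep : ∀ i j, R i * (R j)⁻¹ ∈ K → i = j) :
    H = K := by
  refine le_antisymm hHK fun g hg => ?_
  obtain ⟨i, hi⟩ := hcover g
  obtain ⟨i₀, hi₀⟩ := hcover 1
  have : i = i₀ := hsep i i₀ <| by
    simpa [mul_assoc] using K.mul_mem (K.mul_mem (K.inv_mem (hHK hi)) hg) (hHK hi₀)
  subst this
  simpa using H.mul_mem hi (H.inv_mem hi₀)

end Subgroup

namespace Rabbit

def activity : F →* Equiv.Perm Bool := SemidirectProduct.rightHom.comp Phi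

theorem sec_one (x : Bool) : sec 1 x = 1 := by
  simp [sec]

theorem sec_mul (g h : F) (x : Bool) : sec (g * h) x = sec g x * sec h ((activity g)⁻¹ x) := by
  simp [sec, activity, SemidirectProduct.mul_left]
  rfl

theorem sec_inv (g : F) (x : Bool) : sec g⁻¹ x = (sec g (activity g x))⁻¹ := by
  simp [sec, activity, SemidirectProduct.inv_left]
  rfl

def domPsi : Subgroup F := activity.ker

instance : DecidablePred (· ∈ domPsi) := activity.decidableMemKer

/-- `psiComap K = ψ⁻¹(K)`, so `Dom ψ³ = psiComap (psiComap domPsi)`. -/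
def psiComap (K : Subgroup F) : Subgroup F where
  carrier := {g | g ∈ domPsi ∧ sec g false ∈ K}
  one_mem' := ⟨domPsi.one_mem, by simp [sec_one]⟩
  mul_mem' := by
    rintro a b ⟨ha, ha'⟩ ⟨hb, hb'⟩
    refine ⟨domPsi.mul_mem ha hb, ?_⟩
    rw [sec_mul, MonoidHom.mem_ker.mp ha]
    exact K.mul_mem ha' hb'
  inv_mem' := by
    rintro a ⟨ha, ha'⟩
    refine ⟨domPsi.inv_mem ha, ?_⟩
    rw [sec_inv, MonoidHom.mem_ker.mp ha]
    exact K.inv_mem ha'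

instance (K : Subgroup F) [DecidablePred (· ∈ K)] : DecidablePred (· ∈ psiComap K) := fun g =>
  inferInstanceAs (Decidable (g ∈ domPsi ∧ sec g false ∈ K))

def domPsi3 : Subgroup F := psiComap (psiComap domPsi)

instance : DecidablePred (· ∈ domPsi3) :=
  inferInstanceAs (DecidablePred (· ∈ psiComap (psiComap domPsi)))

def generatorList : List F :=
  [Sg ^ 4, Tg ^ 4, Sg * Tg ^ 2, Sg⁻¹ * Sg⁻¹ * Tg ^ 2 * Sg, Sg⁻¹ * Tg ^ 2 * Sg ^ 2,
    Tg⁻¹ * Sg * Tg, Tg * Sg * Tg⁻¹, (Tg * Sg)⁻¹ * Sg * (Tg * Sg),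
    (Tg⁻¹ * Sg)⁻¹ * Sg * (Tg⁻¹ * Sg)]

theorem mem_gens {g : F} : g ∈ gens ↔ g ∈ generatorList := by
  simp [gens, generatorList]

theorem closure_gens_le_domPsi3 : Subgroup.closure gens ≤ domPsi3 :=
  (Subgroup.closure_le _).mpr fun g hg =>
    (by decide : ∀ g ∈ generatorList, g ∈ domPsi3) g (mem_gens.mp hg)

def transversal : Fin 8 → F
  | 0 => 1
  | 1 => Sg
  | 2 => Sg⁻¹
  | 3 => Tg
  | 4 => Tg⁻¹
  | 5 => Sg * Sg
  | 6 => Sg⁻¹ * Tg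
  | 7 => Sg⁻¹ * Tg⁻¹

theorem eq_of_transversal_mul_inv_mem_domPsi3 :
    ∀ i j, transversal i * (transversal j)⁻¹ ∈ domPsi3 → i = j := by
  decide

def letters : List F := [Sg, Tg, Sg⁻¹, Tg⁻¹]

theorem closure_letters : Subgroup.closure {x | x ∈ letters} = ⊤ := by
  refine eq_top_mono (Subgroup.closure_mono ?_) (FreeGroup.closure_range_of Bool)
  rintro _ ⟨_ | _, rfl⟩ <;> simp [letters, Sg, Tg]

def generatorWords : List F := 1 :: generatorList ++ generatorList.map (·⁻¹)

-- The conjunct `∈ domPsi3` is implied, but it pins down `j` before the costly search for `y, z`.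
theorem coset_table : ∀ i, ∀ x ∈ letters, ∃ j, transversal i * x * (transversal j)⁻¹ ∈ domPsi3 ∧
    ∃ y ∈ generatorWords, ∃ z ∈ generatorWords, transversal i * x * (transversal j)⁻¹ = y * z := by
  decide

theorem mem_closure_gens_of_mem_generatorWords {y : F} (hy : y ∈ generatorWords) :
    y ∈ Subgroup.closure gens := by
  simp only [generatorWords, List.mem_cons, List.mem_append, List.mem_map] at hy
  rcases hy with (rfl | hy) | ⟨y, hy, rfl⟩
  · exact Subgroup.one_mem _
  · exact Subgroup.subset_closure (mem_gens.mpr hy)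
  · exact Subgroup.inv_mem _ (Subgroup.subset_closure (mem_gens.mpr hy))

theorem exists_mul_inv_transversal_mem_closure_gens (g : F) :
    ∃ j, g * (transversal j)⁻¹ ∈ Subgroup.closure gens := by
  refine Subgroup.exists_mul_inv_mem_of_closure_eq_top closure_letters
    (by decide : ∀ x ∈ letters, x⁻¹ ∈ letters)
    (i₀ := 0) rfl (fun i x hx => ?_) g
  obtain ⟨j, -, y, hy, z, hz, hyz⟩ := coset_table i x hx
  exact ⟨j, hyz ▸ Subgroup.mul_mem _ (mem_closure_gens_of_mem_generatorWords hy)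
    (mem_closure_gens_of_mem_generatorWords hz)⟩

theorem closure_gens_eq_domPsi3 : Subgroup.closure gens = domPsi3 :=
  Subgroup.eq_of_le_of_mul_inv_mem closure_gens_le_domPsi3
    exists_mul_inv_transversal_mem_closure_gens eq_of_transversal_mul_inv_mem_domPsi3

theorem index_domPsi3 : domPsi3.index = 8 := by
  rw [Subgroup.index_eq_card_of_mul_inv_mem (R := transversal)
    (fun g => (exists_mul_inv_transversal_mem_closure_gens g).imp fun _ h =>
      closure_gens_le_domPsi3 h)
    eq_of_transversal_mul_inv_mem_domPsi3, Nat.card_eq_fintype_card, Fintype.card_fin]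

end Rabbit

open Rabbit in
theorem stmt5 :
    ((Subgroup.closure gens : Subgroup F) : Set F) =
      {g : F | inactive g ∧ inactive (sec g false) ∧ inactive (sec (sec g false) false)} ∧
    (Subgroup.closure gens : Subgroup F).index = 8 ∧
    psi3 (Sg ^ 4) = Sg ∧
    psi3 (Tg ^ 4) = Tg ∧
    psi3 (Sg * Tg ^ 2) = 1 ∧
    psi3 (Sg⁻¹ * Sg⁻¹ * Tg ^ 2 * Sg) = 1 ∧
    psi3 (Sg⁻¹ * Tg ^ 2 * Sg ^ 2) = 1 ∧
    psi3 (Tg⁻¹ * Sg * Tg) = 1 ∧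
    psi3 (Tg * Sg * Tg⁻¹) = 1 ∧
    psi3 ((Tg * Sg)⁻¹ * Sg * (Tg * Sg)) = 1 ∧
    psi3 ((Tg⁻¹ * Sg)⁻¹ * Sg * (Tg⁻¹ * Sg)) = 1 := by
  rw [closure_gens_eq_domPsi3]
  exact ⟨rfl, index_domPsi3, by decide⟩
end
end

section
/- Let h be the automorphism of F₃ defined by h(α) = (β⁻¹γβα)⁻¹·α·(β⁻¹γβα), h(β) = β, h(γ) = (βαβ⁻¹)⁻¹·γ·(βαβ⁻¹). Then for every δ ∈ Dom φ: (i) T²(δ) ∈ Dom φ and φ(T²(δ)) = h(φ(δ)); (ii) S(δ) ∈ Dom φ and φ(S(δ)) = T(φ(δ)); (iii) T(S(T⁻¹(δ))) ∈ Dom φ and φ(T(S(T⁻¹(δ)))) = φ(δ). Moreover h(δ) = (γβα)⁻¹·T⁻¹(S⁻¹(δ))·(γβα) for every δ ∈ F₃. -/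
noncomputable section

namespace Rab3

/-- The free group on three generators `α`, `β`, `γ`. -/
abbrev F3 := FreeGroup (Fin 3)

def ga : F3 := FreeGroup.of 0
def gb : F3 := FreeGroup.of 1
def gc : F3 := FreeGroup.of 2

/-- The rabbit wreath recursion:
`Φ(α) = ⟨α⁻¹β⁻¹, γβα⟩σ`, `Φ(β) = ⟨α, 1⟩`, `Φ(γ) = ⟨β, 1⟩`. -/
def Phi : F3 →* Wr F3 :=
  FreeGroup.lift ![⟨pair (ga⁻¹ * gb⁻¹) (gc * gb * ga), σswap⟩, ⟨pair ga 1, 1⟩, ⟨pair gb 1, 1⟩]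

/-- `Φ(g)` is inactive, i.e. `g ∈ Dom φ`. -/
def inactive (g : F3) : Prop := (Phi g).right = 1

/-- The virtual endomorphism `φ(g) = g|₀` (first coordinate of `Φ(g)`). -/
def phi (g : F3) : F3 := (Phi g).left false

/-- `T : α ↦ α^{βα}, β ↦ β^{α}, γ ↦ γ`. -/
def Tmap : F3 →* F3 := FreeGroup.lift ![(gb * ga)⁻¹ * ga * (gb * ga), ga⁻¹ * gb * ga, gc]

/-- `T⁻¹ : α ↦ α^{β⁻¹}, β ↦ β^{α⁻¹β⁻¹}, γ ↦ γ`. -/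
def Tmapinv : F3 →* F3 :=
  FreeGroup.lift ![gb * ga * gb⁻¹, (ga⁻¹ * gb⁻¹)⁻¹ * gb * (ga⁻¹ * gb⁻¹), gc]

/-- The automorphism `T` of `F₃`. -/
def Taut : F3 ≃* F3 :=
  MonoidHom.toMulEquiv Tmap Tmapinv
    (by ext x; fin_cases x <;> (simp [Tmap, Tmapinv, ga, gb, gc] <;> group))
    (by ext x; fin_cases x <;> (simp [Tmap, Tmapinv, ga, gb, gc] <;> group))

/-- `S : α ↦ α, β ↦ β^{γβ}, γ ↦ γ^{β}`. -/
def Smap : F3 →* F3 :=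
  FreeGroup.lift ![ga, (gc * gb)⁻¹ * gb * (gc * gb), gb⁻¹ * gc * gb]

/-- `S⁻¹ : α ↦ α, β ↦ β^{γ⁻¹}, γ ↦ γ^{β⁻¹γ⁻¹}`. -/
def Smapinv : F3 →* F3 :=
  FreeGroup.lift ![ga, gc * gb * gc⁻¹, (gb⁻¹ * gc⁻¹)⁻¹ * gc * (gb⁻¹ * gc⁻¹)]

/-- The automorphism `S` of `F₃`. -/
def Saut : F3 ≃* F3 :=
  MonoidHom.toMulEquiv Smap Smapinv
    (by ext x; fin_cases x <;> (simp [Smap, Smapinv, ga, gb, gc] <;> group))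
    (by ext x; fin_cases x <;> (simp [Smap, Smapinv, ga, gb, gc] <;> group))

/-- The automorphism `h` of `F₃`:
`α ↦ α^{β⁻¹γβα}`, `β ↦ β`, `γ ↦ γ^{βαβ⁻¹}`. -/
def hmap : F3 →* F3 :=
  FreeGroup.lift ![(gb⁻¹ * gc * gb * ga)⁻¹ * ga * (gb⁻¹ * gc * gb * ga), gb,
    (gb * ga * gb⁻¹)⁻¹ * gc * (gb * ga * gb⁻¹)]

end Rab3

/-!
Each claim about `φ` comes from an identity of homomorphisms `F₃ → W₃`:
`Φ ∘ T² = (h × h) ∘ Φ`, `Φ ∘ S = (T × T) ∘ Φ` and `Φ ∘ T S T⁻¹ = Φ`. A relation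
`Φ ∘ f = (g × g) ∘ Φ` preserves being inactive and gives `φ ∘ f = g ∘ φ` on `Dom φ`.
Homomorphisms out of a free group agree as soon as they agree on the generators, so each
identity, like `h = (γβα)⁻¹ (T⁻¹ S⁻¹ ·) (γβα)`, is a finite word computation.
-/

namespace Wr

variable {G : Type} [Group G]

def mapBase (f : G →* G) : Wr G →* Wr G :=
  SemidirectProduct.map (MonoidHom.compLeft f Bool) (MonoidHom.id _) fun _ => rfl

@[simp] lemma mapBase_left (f : G →* G) (x : Wr G) (b : Bool) :
    (mapBase f x).left b = f (x.left b) := rfl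

@[simp] lemma mapBase_right (f : G →* G) (x : Wr G) : (mapBase f x).right = x.right := rfl

lemma ext_iff_coords {x y : Wr G} :
    x = y ↔ x.left false = y.left false ∧ x.left true = y.left true ∧ x.right = y.right := by
  refine ⟨by rintro rfl; simp, fun ⟨h₀, h₁, h⟩ => SemidirectProduct.ext (funext ?_) h⟩
  rintro (_ | _) <;> assumption

end Wr

@[simp] lemma permAut_apply {X G : Type} [Group G] (π : Equiv.Perm X) (p : X → G) (x : X) :
    permAut X G π p x = p (π⁻¹ x) := rfl

@[simp] lemma pair_false {G : Type} [Group G] (g₀ g₁ : G) : pair g₀ g₁ false = g₀ := rfl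
@[simp] lemma pair_true {G : Type} [Group G] (g₀ g₁ : G) : pair g₀ g₁ true = g₁ := rfl

@[simp] lemma σswap_inv : σswap⁻¹ = σswap := rfl
@[simp] lemma σswap_false : σswap false = true := rfl
@[simp] lemma σswap_true : σswap true = false := rfl
@[simp] lemma σswap_mul_self : σswap * σswap = 1 := Equiv.swap_mul_self _ _

namespace Rab3

open Wr

lemma inactive_and_phi_of_Phi_comp {f g : F3 →* F3} (hfg : Phi.comp f = (mapBase g).comp Phi)
    {δ : F3} (hδ : inactive δ) : inactive (f δ) ∧ phi (f δ) = g (phi δ) := by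
  have hΦ : Phi (f δ) = mapBase g (Phi δ) := DFunLike.congr_fun hfg δ
  exact ⟨by rw [inactive, hΦ, mapBase_right]; exact hδ, by rw [phi, hΦ, mapBase_left]; rfl⟩

lemma Phi_comp_Tmap_Tmap : Phi.comp (Tmap.comp Tmap) = (mapBase hmap).comp Phi := by
  refine FreeGroup.ext_hom _ _ fun i => ?_
  fin_cases i <;> refine Wr.ext_iff_coords.mpr ⟨?_, ?_, ?_⟩ <;>
    simp [Phi, Tmap, hmap, ga, gb, gc] <;> group

lemma Phi_comp_Smap : Phi.comp Smap = (mapBase Tmap).comp Phi := by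
  refine FreeGroup.ext_hom _ _ fun i => ?_
  fin_cases i <;> refine Wr.ext_iff_coords.mpr ⟨?_, ?_, ?_⟩ <;>
    simp [Phi, Smap, Tmap, ga, gb, gc] <;> group

lemma Phi_comp_Tmap_Smap_Tmapinv :
    Phi.comp (Tmap.comp (Smap.comp Tmapinv)) = (mapBase (MonoidHom.id F3)).comp Phi := by
  refine FreeGroup.ext_hom _ _ fun i => ?_
  fin_cases i <;> refine Wr.ext_iff_coords.mpr ⟨?_, ?_, ?_⟩ <;>
    simp [Phi, Tmap, Smap, Tmapinv, ga, gb, gc] <;> group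

lemma hmap_eq_conj_Tmapinv_Smapinv :
    hmap = (MulAut.conj (gc * gb * ga)⁻¹).toMonoidHom.comp (Tmapinv.comp Smapinv) := by
  refine FreeGroup.ext_hom _ _ fun i => ?_
  fin_cases i <;> simp [hmap, Tmapinv, Smapinv, ga, gb, gc] <;> group

end Rab3

open Rab3 in
theorem stmt6 :
    (∀ δ : F3, inactive δ →
      (inactive (Taut (Taut δ)) ∧ phi (Taut (Taut δ)) = hmap (phi δ)) ∧
      (inactive (Saut δ) ∧ phi (Saut δ) = Taut (phi δ)) ∧
      (inactive (Taut (Saut (Taut.symm δ))) ∧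
        phi (Taut (Saut (Taut.symm δ))) = phi δ)) ∧
    (∀ δ : F3, hmap δ = (gc * gb * ga)⁻¹ * Taut.symm (Saut.symm δ) * (gc * gb * ga)) := by
  refine ⟨fun δ hδ => ⟨?_, ?_, ?_⟩, fun δ => ?_⟩
  · exact inactive_and_phi_of_Phi_comp Phi_comp_Tmap_Tmap hδ
  · exact inactive_and_phi_of_Phi_comp Phi_comp_Smap hδ
  · exact inactive_and_phi_of_Phi_comp Phi_comp_Tmap_Smap_Tmapinv hδ
  · rw [hmap_eq_conj_Tmapinv_Smapinv, MonoidHom.comp_apply, MulEquiv.coe_toMonoidHom,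
      MulAut.conj_apply, inv_inv]
    rfl
end
end

section
/- In the quotient group Ĝ = F/N, the image of the generator b has infinite order. -/
noncomputable section

namespace Obstr

/-- The free group on two generators `a`, `b`. -/
abbrev F := FreeGroup Bool

def ag : F := FreeGroup.of false
def bg : F := FreeGroup.of true

/-- The wreath recursion `Φ(a) = ⟨1,1⟩σ`, `Φ(b) = ⟨b⁻¹a⁻¹, b⟩`. -/
def Phi : F →* Wr F := FreeGroup.lift fun x =>
  if x then ⟨pair (bg⁻¹ * ag⁻¹) bg, 1⟩ else ⟨pair 1 1, σswap⟩

/-- The section `g|ₓ`. -/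
def sec (g : F) (x : Bool) : F := (Phi g).left x

/-- `Φ(g)` is inactive. -/
def inactive (g : F) : Prop := (Phi g).right = 1

/-- The commutator `[x,y] = x⁻¹y⁻¹xy`. -/
def comm (x y : F) : F := x⁻¹ * y⁻¹ * x * y

/-- The relators `{a², (ab)⁴} ∪ {[b⁴, w⁻¹b⁴w] : w ∈ F}`. -/
def rels : Set F :=
  {ag ^ 2, (ag * bg) ^ 4} ∪ {x : F | ∃ w : F, x = comm (bg ^ 4) (w⁻¹ * bg ^ 4 * w)}

/-- `N`, the normal closure of the relators. -/
def NN : Subgroup F := Subgroup.normalClosure rels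

instance : NN.Normal := Subgroup.normalClosure_normal

/-- The quotient group `Ĝ = F/N`. -/
abbrev Ghat := F ⧸ NN

/-- The quotient homomorphism `π : F → Ĝ`. -/
def pi : F →* Ghat := QuotientGroup.mk' NN

end Obstr

namespace Obstr2
open Obstr

/-- The reflection `x ↦ -x` of `ℤ`. -/
def A : Equiv.Perm ℤ := Equiv.neg ℤ
/-- The translation `x ↦ x + 1` of `ℤ`. -/
def B : Equiv.Perm ℤ := Equiv.addRight 1

/-- The map to the infinite dihedral group: `a ↦ A`, `b ↦ B`. -/
def phi : F →* Equiv.Perm ℤ := FreeGroup.lift fun x => if x then B else A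

lemma phi_a : phi ag = A := by simp [phi, ag]
lemma phi_b : phi bg = B := by simp [phi, bg]

lemma B_pow (n : ℕ) (x : ℤ) : (B ^ n) x = x + n := by
  induction n with
  | zero => simp
  | succ n ih =>
    rw [pow_succ', Equiv.Perm.mul_apply, ih]
    simp [B]
    ring

lemma A_apply (x : ℤ) : A x = -x := rfl

lemma A_sq : A ^ 2 = 1 := by
  ext x
  simp [pow_succ, A, Equiv.Perm.mul_apply]

lemma AB_sq : (A * B) ^ 2 = 1 := by
  ext x
  simp [pow_succ, A, B, Equiv.Perm.mul_apply]

/-- The key invariant: conjugation by any element in the image of `phi` sends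
`B ^ 4` to `B ^ 4` or to its inverse. -/
def P (g : Equiv.Perm ℤ) : Prop :=
  SemiconjBy g (B ^ 4) (B ^ 4) ∨ SemiconjBy g (B ^ 4) (B ^ 4)⁻¹

lemma P_one : P 1 := Or.inl (SemiconjBy.one_left _)

lemma P_mul {g h : Equiv.Perm ℤ} (hg : P g) (hh : P h) : P (g * h) := by
  rcases hh with hh | hh
  · rcases hg with hg | hg
    · exact Or.inl (hg.mul_left hh)
    · exact Or.inr (hg.mul_left hh)
  · rcases hg with hg | hg
    · exact Or.inr ((hg.inv_right).mul_left hh)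
    · refine Or.inl ?_
      have := (hg.inv_right).mul_left hh
      rwa [inv_inv] at this
lemma P_inv {g : Equiv.Perm ℤ} (hg : P g) : P g⁻¹ := by
  rcases hg with hg | hg
  · exact Or.inl hg.inv_symm_left
  · refine Or.inr ?_
    have := hg.inv_symm_left.inv_right
    rwa [inv_inv] at this

lemma P_A : P A := by
  refine Or.inr ?_
  show A * B ^ 4 = (B ^ 4)⁻¹ * A
  ext x
  have h1 : (B ^ 4) x = x + 4 := by simpa using B_pow 4 x
  have h2 : ∀ y : ℤ, (B ^ 4)⁻¹ y = y - 4 := by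
    intro y
    have : (B ^ 4) (y - 4) = y := by simpa using B_pow 4 (y - 4)
    calc (B ^ 4)⁻¹ y = (B ^ 4)⁻¹ ((B ^ 4) (y - 4)) := by rw [this]
    _ = y - 4 := by simp
  rw [Equiv.Perm.mul_apply, Equiv.Perm.mul_apply, h1, h2, A_apply, A_apply]
  ring

lemma P_B : P B := by
  refine Or.inl ?_
  show B * B ^ 4 = B ^ 4 * B
  rw [← pow_succ, ← pow_succ']

lemma key (g : F) : P (phi g) := by
  induction g using FreeGroup.induction_on with
  | C1 => simpa using P_one
  | of x =>
    cases x
    · have : phi (FreeGroup.of false) = A := by simp [phi]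
      rw [this]
      exact P_A
    · have : phi (FreeGroup.of true) = B := by simp [phi]
      rw [this]
      exact P_B
  | inv_of x ih =>
    rw [map_inv]
    exact P_inv ih
  | mul x y ihx ihy =>
    rw [map_mul]
    exact P_mul ihx ihy

lemma rels_sub : rels ⊆ (phi.ker : Set F) := by
  intro r hr
  rcases hr with hr | hr
  · rcases hr with hr | hr
    · subst hr
      simp only [SetLike.mem_coe, MonoidHom.mem_ker, map_pow, phi_a]
      exact A_sq
    · rw [Set.mem_singleton_iff] at hr
      subst hr
      simp only [SetLike.mem_coe, MonoidHom.mem_ker, map_pow, map_mul, phi_a, phi_b]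
      rw [show (4:ℕ) = 2*2 from rfl, pow_mul, AB_sq, one_pow]
  · obtain ⟨w, hw⟩ := hr
    subst hw
    simp only [SetLike.mem_coe, MonoidHom.mem_ker, Obstr.comm, map_mul, map_inv, map_pow, phi_b]
    have hP : P ((phi w)⁻¹) := P_inv (key w)
    have hcomm : Commute (B ^ 4) ((phi w)⁻¹ * B ^ 4 * phi w) := by
      rcases hP with hP | hP
      · have : (phi w)⁻¹ * B ^ 4 * phi w = B ^ 4 := by
          rw [hP.eq]
          group
        rw [this]
      · have : (phi w)⁻¹ * B ^ 4 * phi w = (B ^ 4)⁻¹ := by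
          rw [hP.eq]
          group
        rw [this]
        exact (Commute.refl (B ^ 4)).inv_right
    have h := hcomm.eq
    calc (B ^ 4)⁻¹ * ((phi w)⁻¹ * B ^ 4 * phi w)⁻¹ * (B ^ 4) * ((phi w)⁻¹ * B ^ 4 * phi w)
        = (B ^ 4)⁻¹ * ((phi w)⁻¹ * B ^ 4 * phi w)⁻¹ *
            ((B ^ 4) * ((phi w)⁻¹ * B ^ 4 * phi w)) := by rw [mul_assoc]
      _ = (B ^ 4)⁻¹ * ((phi w)⁻¹ * B ^ 4 * phi w)⁻¹ *
            (((phi w)⁻¹ * B ^ 4 * phi w) * (B ^ 4)) := by rw [h]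
      _ = 1 := by group

lemma NN_le_ker : NN ≤ phi.ker := Subgroup.normalClosure_le_normal rels_sub

end Obstr2

open Obstr in
theorem stmt14 : ¬ IsOfFinOrder (pi bg) := by
  intro h
  obtain ⟨n, hn, h1⟩ := isOfFinOrder_iff_pow_eq_one.mp h
  have hmem : bg ^ n ∈ NN := by
    rw [← QuotientGroup.eq_one_iff (G := F) (N := NN)]
    have : pi (bg ^ n) = (pi bg) ^ n := map_pow pi bg n
    have h2 : pi (bg ^ n) = 1 := by rw [this, h1]
    exact h2
  have hk : Obstr2.phi (bg ^ n) = 1 := Obstr2.NN_le_ker hmem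
  rw [map_pow, Obstr2.phi_b] at hk
  have := congrArg (fun e : Equiv.Perm ℤ => e 0) hk
  simp only [Equiv.Perm.one_apply] at this
  rw [Obstr2.B_pow n 0] at this
  simp at this
  omega
end
end
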